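/- The largest size of a (t, t+1)-core partition with distinct parts is floor((1/3) * C(t+1, 2)), where C(t+1,2) = t(t+1)/2. -/

import Mathlib

/-- An integer partition, given by its (weakly decreasing, eventually zero)
sequence of parts, indexed from `0`. -/
structure IntPartition where
  parts : ℕ → ℕ
  antitone : ∀ i j, i ≤ j → parts j ≤ parts i
  finite : ∃ N, ∀ i, N ≤ i → parts i = 0

namespace IntPartition

/-- The size of a partition: the sum of its parts. -/
noncomputable def size (lam : IntPartition) : ℕ := ∑ᶠ i, lam.parts i

/-- The parts of the conjugate partition: `conjParts lam j` is the number of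
rows `i` with `lam.parts i > j` (rows and columns are `0`-indexed). -/
noncomputable def conjParts (lam : IntPartition) (j : ℕ) : ℕ :=
  Nat.card {i : ℕ | j < lam.parts i}

/-- A partition is self-conjugate if it equals its conjugate. -/
def IsSelfConjugate (lam : IntPartition) : Prop :=
  ∀ j, lam.conjParts j = lam.parts j

/-- `(i, j)` (both `0`-indexed) is a cell of the Young diagram of `lam`. -/
def IsCell (lam : IntPartition) (i j : ℕ) : Prop := j < lam.parts i

/-- The hook length of the cell `(i, j)` (both `0`-indexed): the number of
cells directly to the right, plus the number directly below, plus one. -/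
noncomputable def hook (lam : IntPartition) (i j : ℕ) : ℕ :=
  (lam.parts i - j) + (lam.conjParts j - i) - 1

/-- A partition is a `t`-core if no hook length is divisible by `t`. -/
def IsCore (lam : IntPartition) (t : ℕ) : Prop :=
  ∀ i j, lam.IsCell i j → ¬ (t ∣ lam.hook i j)

/-- The size of the Durfee square: the largest `k` such that the partition has
at least `k` parts of size at least `k`. -/
noncomputable def durfee (lam : IntPartition) : ℕ :=
  Nat.card {i : ℕ | i < lam.parts i}

/-- A partition has distinct parts if its (nonzero) parts are pairwise different. -/
def DistinctParts (lam : IntPartition) : Prop :=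
  ∀ i j, lam.parts i ≠ 0 → lam.parts j ≠ 0 → i ≠ j → lam.parts i ≠ lam.parts j

/-- The set of main diagonal hook lengths of `lam`. -/
noncomputable def MD (lam : IntPartition) : Set ℕ :=
  {h | ∃ i < lam.durfee, lam.hook i i = h}

/-- `lam ∈ DS(t)`: `lam` is a self-conjugate `(t, t+1)`-core partition whose
first `durfee lam` parts are pairwise distinct. -/
def InDS (lam : IntPartition) (t : ℕ) : Prop :=
  lam.IsSelfConjugate ∧ lam.IsCore t ∧ lam.IsCore (t + 1) ∧
    ∀ i j, i < lam.durfee → j < lam.durfee → i ≠ j → lam.parts i ≠ lam.parts j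

end IntPartition

/-!
Let `λ` have distinct parts, largest part `p` and `m` parts. Along the first row the hook
lengths run from `p + m - 1` down to `1`, and since the column lengths drop by at most one
(distinct parts) consecutive hooks drop by at most two. So if `p + m - 1 ≥ t`, some
first-row hook equals `t` or `t + 1`; hence a `(t, t+1)`-core has `p + m ≤ t`. Distinct parts
then give `|λ| ≤ p + (p - 1) + ⋯ + (p - m + 1) ≤ m(2t - 3m + 1)/2`, which is at most
`t(t+1)/6`, with equality up to rounding at `m = ⌊(t+1)/3⌋`. The staircase with these
parameters has all hooks below `t`, so it attains the bound.
-/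

lemma exists_eq_or_eq_add_one_of_le_add_two {f : ℕ → ℕ} {t n : ℕ}
    (hstep : ∀ j < n, f j ≤ f (j + 1) + 2) (h0 : t ≤ f 0) (hn : f n ≤ t + 1) :
    ∃ j ≤ n, f j = t ∨ f j = t + 1 := by
  induction n with
  | zero => exact ⟨0, le_rfl, by omega⟩
  | succ n ih =>
    by_cases hfn : f n ≤ t + 1
    · obtain ⟨j, hj, hfj⟩ := ih (fun j hj => hstep j (by omega)) hfn
      exact ⟨j, by omega, hfj⟩
    · have := hstep n (by omega)
      exact ⟨n + 1, le_rfl, by omega⟩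

lemma six_mul_le_of_two_mul_add_le {s m a t : ℕ} (h : 2 * s + m * (m - 1) ≤ 2 * m * a)
    (hamt : a + m ≤ t) : 6 * s ≤ (t + 1) * t := by
  -- `(t + 1) t - 3m(2t - 3m + 1) = (t - 3m)(t - 3m + 1)`, a product of consecutive integers
  have hconsec : 0 ≤ ((t : ℤ) - 3 * m) * ((t : ℤ) - 3 * m + 1) := by
    rcases le_or_gt 0 ((t : ℤ) - 3 * m) with hnonneg | hneg
    · positivity
    · nlinarith
  rcases Nat.eq_zero_or_pos m with rfl | hm
  · omega
  zify [hamt, hm] at h ⊢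
  nlinarith

lemma lt_six_mul_add_six {s m t : ℕ} (hm : m = (t + 1) / 3)
    (h : 2 * s + m * (m - 1) = 2 * m * (t - m)) : (t + 1) * t < 6 * s + 6 := by
  rcases Nat.eq_zero_or_pos m with rfl | hm0
  · have : t ≤ 1 := by omega
    interval_cases t <;> omega
  have hmt : m ≤ t := by omega
  obtain ⟨r, hr3, hr⟩ : ∃ r < 3, t + 1 = 3 * m + r := ⟨(t + 1) % 3, by omega, by omega⟩
  zify [hmt, hm0] at h ⊢
  have ht : (t : ℤ) = 3 * m + r - 1 := by omega
  rw [ht] at h ⊢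
  interval_cases r <;> push_cast at h ⊢ <;> linarith

lemma two_mul_sum_range_add_mul_sub_one (f : ℕ → ℕ) (m : ℕ) :
    2 * ∑ i ∈ Finset.range m, f i + m * (m - 1) = 2 * ∑ i ∈ Finset.range m, (f i + i) := by
  rw [← Finset.sum_range_id_mul_two, Finset.sum_add_distrib]
  ring

lemma choose_two_div_three (t : ℕ) : (t + 1).choose 2 / 3 = (t + 1) * t / 6 := by
  rw [Nat.choose_two_right, Nat.add_sub_cancel, Nat.div_div_eq_div_mul]

namespace IntPartition

variable (lam : IntPartition)

lemma exists_setOf_lt_parts_eq_Iio (j : ℕ) : ∃ k, {i | j < lam.parts i} = Set.Iio k := by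
  have hex : ∃ k, lam.parts k ≤ j := by
    obtain ⟨N, hN⟩ := lam.finite
    exact ⟨N, (hN N le_rfl).trans_le (Nat.zero_le j)⟩
  refine ⟨Nat.find hex, Set.ext fun i =>
    ⟨fun hi => ?_, fun hi => Nat.lt_of_not_le (Nat.find_min hex hi)⟩⟩
  by_contra hki
  exact absurd ((lam.antitone _ i (not_lt.1 hki)).trans (Nat.find_spec hex)) (not_le.2 hi)

lemma lt_conjParts_iff {i j : ℕ} : i < lam.conjParts j ↔ j < lam.parts i := by
  obtain ⟨k, hk⟩ := lam.exists_setOf_lt_parts_eq_Iio j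
  rw [conjParts, hk, Nat.card_coe_set_eq, Set.ncard_Iio_nat, ← Set.mem_Iio, ← hk,
    Set.mem_ofPred_eq]

lemma conjParts_le_iff {i j : ℕ} : lam.conjParts j ≤ i ↔ lam.parts i ≤ j := by
  simpa only [not_lt] using lam.lt_conjParts_iff.not

lemma conjParts_antitone : Antitone lam.conjParts := fun _ _ hjj' =>
  lam.conjParts_le_iff.2 ((lam.conjParts_le_iff.1 le_rfl).trans hjj')

lemma hook_lt_parts_zero_add_conjParts_zero {i j : ℕ} (h : lam.IsCell i j) :
    lam.hook i j < lam.parts 0 + lam.conjParts 0 := by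
  have : j < lam.parts i := h
  have := lam.antitone 0 i (Nat.zero_le i)
  have := lam.conjParts_antitone (Nat.zero_le j)
  unfold hook
  omega

lemma isCore_of_parts_zero_add_conjParts_zero_le {t : ℕ}
    (h : lam.parts 0 + lam.conjParts 0 ≤ t) : lam.IsCore t := fun i j hcell hdvd => by
  have hpos : 0 < lam.hook i j := by
    have := lam.lt_conjParts_iff.2 hcell
    unfold IsCell hook at *
    omega
  exact absurd (Nat.le_of_dvd hpos hdvd)
    (not_le.2 ((lam.hook_lt_parts_zero_add_conjParts_zero hcell).trans_le h))

lemma size_eq_sum_range {n : ℕ} (hn : lam.conjParts 0 ≤ n) :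
    lam.size = ∑ i ∈ Finset.range n, lam.parts i := by
  refine finsum_eq_sum_of_support_subset _ fun i hi => ?_
  rw [Finset.coe_range, Set.mem_Iio]
  exact (lam.lt_conjParts_iff.2 (Nat.pos_of_ne_zero hi)).trans_le hn

section DistinctParts

variable {lam}

lemma conjParts_le_conjParts_succ_add_one (hd : lam.DistinctParts) (j : ℕ) :
    lam.conjParts j ≤ lam.conjParts (j + 1) + 1 := by
  by_contra! hlt
  set a := lam.conjParts (j + 1)
  have h1 : j < lam.parts (a + 1) := lam.lt_conjParts_iff.1 (by omega)
  have h2 : lam.parts a ≤ j + 1 := lam.conjParts_le_iff.1 le_rfl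
  have h3 := lam.antitone a (a + 1) (Nat.le_succ a)
  exact hd a (a + 1) (by omega) (by omega) (by omega) (by omega)

lemma conjParts_parts_zero_sub_one (hd : lam.DistinctParts) (h : lam.parts 0 ≠ 0) :
    lam.conjParts (lam.parts 0 - 1) = 1 := by
  have h1 : 0 < lam.conjParts (lam.parts 0 - 1) := lam.lt_conjParts_iff.2 (by omega)
  have h2 : lam.conjParts (lam.parts 0 - 1) ≤ 1 := by
    rw [conjParts_le_iff]
    have := lam.antitone 0 1 zero_le_one
    have := hd 0 1 h
    omega
  omega

lemma hook_zero_le_hook_zero_succ_add_two (hd : lam.DistinctParts) {j : ℕ}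
    (hj : j + 1 < lam.parts 0) : lam.hook 0 j ≤ lam.hook 0 (j + 1) + 2 := by
  have := conjParts_le_conjParts_succ_add_one hd j
  unfold hook
  omega

lemma parts_zero_add_conjParts_zero_le (hd : lam.DistinctParts) {t : ℕ} (ht : lam.IsCore t)
    (ht1 : lam.IsCore (t + 1)) : lam.parts 0 + lam.conjParts 0 ≤ t := by
  by_contra! hlt
  have hp0 : lam.parts 0 ≠ 0 := fun h0 => by
    have := lam.conjParts_le_iff.2 h0.le
    omega
  obtain ⟨j, hj, hhook⟩ := exists_eq_or_eq_add_one_of_le_add_two (f := lam.hook 0)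
    (n := lam.parts 0 - 1) (t := t)
    (fun j hj => hook_zero_le_hook_zero_succ_add_two hd (by omega))
    (by unfold hook; omega)
    (by simp only [hook, conjParts_parts_zero_sub_one hd hp0]; omega)
  have hcell : lam.IsCell 0 j := by unfold IsCell; omega
  rcases hhook with h | h
  · exact ht 0 j hcell (h ▸ dvd_rfl)
  · exact ht1 0 j hcell (h ▸ dvd_rfl)

lemma parts_add_le_parts_zero (hd : lam.DistinctParts) {i : ℕ} (hi : lam.parts i ≠ 0) :
    lam.parts i + i ≤ lam.parts 0 := by
  induction i with
  | zero => simp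
  | succ i ih =>
    have hmono := lam.antitone i (i + 1) (Nat.le_succ i)
    have hne := hd i (i + 1) (by omega) hi (by omega)
    have := ih (by omega)
    omega

lemma two_mul_size_add_le (hd : lam.DistinctParts) :
    2 * lam.size + lam.conjParts 0 * (lam.conjParts 0 - 1) ≤
      2 * lam.conjParts 0 * lam.parts 0 := by
  rw [lam.size_eq_sum_range le_rfl, two_mul_sum_range_add_mul_sub_one]
  calc _ ≤ 2 * ∑ _i ∈ Finset.range (lam.conjParts 0), lam.parts 0 := by
          gcongr with i hi
          exact parts_add_le_parts_zero hd
            (Nat.pos_iff_ne_zero.1 (lam.lt_conjParts_iff.1 (Finset.mem_range.1 hi)))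
    _ = _ := by rw [Finset.sum_const, Finset.card_range, smul_eq_mul]; ring

lemma six_mul_size_le (hd : lam.DistinctParts) {t : ℕ} (ht : lam.IsCore t)
    (ht1 : lam.IsCore (t + 1)) : 6 * lam.size ≤ (t + 1) * t :=
  six_mul_le_of_two_mul_add_le (two_mul_size_add_le hd)
    (parts_zero_add_conjParts_zero_le hd ht ht1)

end DistinctParts

def staircase (a m : ℕ) : IntPartition where
  parts i := if i < m then a - i else 0
  antitone i j hij := by split_ifs <;> omega
  finite := ⟨m, fun i hi => if_neg (by omega)⟩

lemma staircase_distinctParts (a m : ℕ) : (staircase a m).DistinctParts :=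
  fun i j hi hj hij => by
    simp only [staircase] at hi hj ⊢
    split_ifs at hi hj ⊢ <;> omega

lemma staircase_parts_zero_le (a m : ℕ) : (staircase a m).parts 0 ≤ a := by
  simp only [staircase]
  split_ifs <;> omega

lemma staircase_conjParts_zero_le (a m : ℕ) : (staircase a m).conjParts 0 ≤ m :=
  (staircase a m).conjParts_le_iff.2 (by simp [staircase])

lemma staircase_isCore {a m t : ℕ} (h : a + m ≤ t) : (staircase a m).IsCore t :=
  isCore_of_parts_zero_add_conjParts_zero_le _ <| by
    have := staircase_parts_zero_le a m
    have := staircase_conjParts_zero_le a m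
    omega

lemma two_mul_size_staircase_add {a m : ℕ} (h : m ≤ a + 1) :
    2 * (staircase a m).size + m * (m - 1) = 2 * m * a := by
  rw [(staircase a m).size_eq_sum_range (staircase_conjParts_zero_le a m),
    two_mul_sum_range_add_mul_sub_one]
  calc _ = 2 * ∑ _i ∈ Finset.range m, a := by
          refine congrArg _ (Finset.sum_congr rfl fun i hi => ?_)
          have := Finset.mem_range.1 hi
          simp only [staircase, if_pos this]
          omega
    _ = _ := by rw [Finset.sum_const, Finset.card_range, smul_eq_mul]; ring

end IntPartition

theorem largest_size_core_distinct_general (t : ℕ) :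
    IsGreatest {n : ℕ | ∃ lam : IntPartition,
        lam.IsCore t ∧ lam.IsCore (t + 1) ∧ lam.DistinctParts ∧ lam.size = n}
      ((t + 1).choose 2 / 3) := by
  rw [choose_two_div_three]
  set m := (t + 1) / 3 with hm
  set stair := IntPartition.staircase (t - m) m
  have hcore : stair.IsCore t := IntPartition.staircase_isCore (by omega)
  have hcore1 : stair.IsCore (t + 1) := IntPartition.staircase_isCore (by omega)
  have hdist : stair.DistinctParts := IntPartition.staircase_distinctParts (t - m) m
  refine ⟨⟨stair, hcore, hcore1, hdist, ?_⟩, ?_⟩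
  · refine (Nat.div_eq_of_lt_le ?_ ?_).symm
    · linarith [IntPartition.six_mul_size_le hdist hcore hcore1]
    · linarith [lt_six_mul_add_six hm (IntPartition.two_mul_size_staircase_add (by omega))]
  · rintro _ ⟨lam, ht, ht1, hd, rfl⟩
    rw [Nat.le_div_iff_mul_le (by norm_num)]
    linarith [IntPartition.six_mul_size_le hd ht ht1]

/-- The largest size of a `(t, t+1)`-core partition with distinct parts is
`⌊(1/3) * C(t+1, 2)⌋`. -/
theorem largest_size_core_distinct (t : ℕ) (ht : 1 ≤ t) :
    IsGreatest {n : ℕ | ∃ lam : IntPartition,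
        lam.IsCore t ∧ lam.IsCore (t + 1) ∧ lam.DistinctParts ∧ lam.size = n}
      ((t + 1).choose 2 / 3) :=
  largest_size_core_distinct_general t
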